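/- The function g(a) = 5.45 / (a^a · (1−a)^{1−a}) on (0,1) and the function f(a) = 27 / (a^a · (3−a)^{3−a}) on (0,3) satisfy: there exists a₀ ∈ (0.95, 0.96) such that f(a₀) = g(a₀), f is increasing on (0, 1), and both f(a₀) and g(a₀) are less than 6.54. -/

import Mathlib

open Real Set

private lemma rpow_lt_aux {x u e : ℝ} (hx : 0 < x) (hu : 0 < u) (p q : ℕ) (hq : 0 < q)
    (he : e = (p : ℝ) / (q : ℝ)) (h : x ^ p < u ^ q) : x ^ e < u := by
  have hq' : ((q : ℝ)) ≠ 0 := by positivity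
  have key : (x ^ e) ^ q = x ^ p := by
    rw [he, ← Real.rpow_natCast (x ^ ((p : ℝ) / (q : ℝ))) q, ← Real.rpow_mul hx.le,
      div_mul_cancel₀ _ hq', Real.rpow_natCast]
  by_contra hle
  push_neg at hle
  have : u ^ q ≤ (x ^ e) ^ q := pow_le_pow_left₀ hu.le hle q
  rw [key] at this
  linarith

private lemma lt_rpow_aux {x u e : ℝ} (hx : 0 < x) (hu : 0 ≤ u) (p q : ℕ) (hq : 0 < q)
    (he : e = (p : ℝ) / (q : ℝ)) (h : u ^ q < x ^ p) : u < x ^ e := by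
  have hq' : ((q : ℝ)) ≠ 0 := by positivity
  have key : (x ^ e) ^ q = x ^ p := by
    rw [he, ← Real.rpow_natCast (x ^ ((p : ℝ) / (q : ℝ))) q, ← Real.rpow_mul hx.le,
      div_mul_cancel₀ _ hq', Real.rpow_natCast]
  by_contra hle
  push_neg at hle
  have : (x ^ e) ^ q ≤ u ^ q := pow_le_pow_left₀ (Real.rpow_nonneg hx.le e) hle q
  rw [key] at this
  linarith

private lemma exp_form {a : ℝ} (ha : a ∈ Set.Ioo (0:ℝ) 1) :
    a ^ a * (3 - a) ^ (3 - a) =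
      Real.exp (Real.log a * a + Real.log (3 - a) * (3 - a)) := by
  have h3 : (0:ℝ) < 3 - a := by linarith [ha.2]
  rw [Real.rpow_def_of_pos ha.1, Real.rpow_def_of_pos h3, ← Real.exp_add]

private lemma mono_f : StrictMonoOn (fun a : ℝ => 27 / (a ^ a * (3 - a) ^ (3 - a)))
    (Set.Ioo 0 1) := by
  have anti : StrictAntiOn (fun a : ℝ => Real.log a * a + Real.log (3 - a) * (3 - a))
      (Set.Ioo 0 1) := by
    apply strictAntiOn_of_deriv_neg (convex_Ioo 0 1)
    · apply ContinuousOn.add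
      · exact (Real.continuousOn_log.mono (fun x hx => by
          simp only [mem_compl_iff, mem_singleton_iff]
          exact ne_of_gt hx.1)).mul continuousOn_id
      · have hc : ContinuousOn (fun a : ℝ => (3:ℝ) - a) (Set.Ioo 0 1) :=
          continuousOn_const.sub continuousOn_id
        exact (Real.continuousOn_log.comp hc (fun x hx => by
          simp only [mem_compl_iff, mem_singleton_iff]
          have : (0:ℝ) < 3 - x := by linarith [hx.2]
          exact ne_of_gt this)).mul hc
    · intro x hx
      rw [interior_Ioo] at hx
      obtain ⟨hx0, hx1⟩ := hx
      have h3 : (0:ℝ) < 3 - x := by linarith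
      have d1 : HasDerivAt (fun a : ℝ => Real.log a * a) (x⁻¹ * x + Real.log x * 1) x :=
        (Real.hasDerivAt_log hx0.ne').mul (hasDerivAt_id x)
      have d2a : HasDerivAt (fun a : ℝ => (3:ℝ) - a) (-1) x := (hasDerivAt_id x).const_sub 3
      have d2b : HasDerivAt (fun a : ℝ => Real.log (3 - a)) ((3 - x)⁻¹ * (-1)) x :=
        (Real.hasDerivAt_log h3.ne').comp x d2a
      have d2 : HasDerivAt (fun a : ℝ => Real.log (3 - a) * (3 - a))
          ((3 - x)⁻¹ * (-1) * (3 - x) + Real.log (3 - x) * (-1)) x := d2b.mul d2a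
      have d := d1.add d2
      rw [show (fun a : ℝ => Real.log a * a + Real.log (3 - a) * (3 - a)) =
          (fun a : ℝ => Real.log a * a) + (fun a : ℝ => Real.log (3 - a) * (3 - a)) from rfl,
        d.deriv]
      have hlog : Real.log x < Real.log (3 - x) := Real.log_lt_log hx0 (by linarith)
      have e1 : x⁻¹ * x = 1 := inv_mul_cancel₀ hx0.ne'
      have e2 : (3 - x)⁻¹ * (3 - x) = 1 := inv_mul_cancel₀ h3.ne'
      have e3 : (3 - x)⁻¹ * (-1) * (3 - x) = -((3 - x)⁻¹ * (3 - x)) := by ring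
      rw [e3, e2, e1]
      linarith
  intro x hx y hy hxy
  simp only
  rw [exp_form hx, exp_form hy]
  exact div_lt_div_of_pos_left (by norm_num) (Real.exp_pos _)
    (Real.exp_lt_exp.mpr (anti hx hy hxy))

set_option maxHeartbeats 1000000 in
theorem stmt_14 :
    ∃ a₀ ∈ Set.Ioo (0.95 : ℝ) 0.96,
      (27 / (a₀ ^ a₀ * (3 - a₀) ^ (3 - a₀)) : ℝ) =
        5.45 / (a₀ ^ a₀ * (1 - a₀) ^ (1 - a₀)) ∧
      StrictMonoOn (fun a : ℝ => 27 / (a ^ a * (3 - a) ^ (3 - a))) (Set.Ioo 0 1) ∧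
      (27 / (a₀ ^ a₀ * (3 - a₀) ^ (3 - a₀)) : ℝ) < 6.54 ∧
      (5.45 / (a₀ ^ a₀ * (1 - a₀) ^ (1 - a₀)) : ℝ) < 6.54 := by
  -- the crossing function
  set H : ℝ → ℝ := fun a => 27 * (1 - a) ^ (1 - a) - 5.45 * (3 - a) ^ (3 - a) with hH
  have hcont : ContinuousOn H (Set.Icc (0.955:ℝ) 0.956) := by
    apply ContinuousOn.sub
    · apply continuousOn_const.mul
      apply ContinuousOn.rpow (continuousOn_const.sub continuousOn_id)
        (continuousOn_const.sub continuousOn_id)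
      intro x hx
      left
      have : (0:ℝ) < 1 - x := by
        have := hx.2
        norm_num at this ⊢
        linarith
      exact ne_of_gt this
    · apply continuousOn_const.mul
      apply ContinuousOn.rpow (continuousOn_const.sub continuousOn_id)
        (continuousOn_const.sub continuousOn_id)
      intro x hx
      left
      have : (0:ℝ) < 3 - x := by
        have := hx.2
        norm_num at this ⊢
        linarith
      exact ne_of_gt this
  -- endpoint estimates
  have hA : ((1:ℝ) - 0.955) ^ ((1:ℝ) - 0.955) < 0.8699 := by
    have e1 : (1:ℝ) - 0.955 = 9 / 200 := by norm_num
    rw [e1]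
    exact rpow_lt_aux (by norm_num) (by norm_num) 9 200 (by norm_num) (by norm_num)
      (by norm_num)
  have hB : (4.3185:ℝ) < ((3:ℝ) - 0.955) ^ ((3:ℝ) - 0.955) := by
    have e1 : (3:ℝ) - 0.955 = 409 / 200 := by norm_num
    rw [e1]
    exact lt_rpow_aux (by norm_num) (by norm_num) 409 200 (by norm_num) (by norm_num)
      (by rw [show (409:ℕ) = 200 * 2 + 9 from rfl, pow_add, pow_mul]; norm_num)
  have hC : (0.8714:ℝ) < ((1:ℝ) - 0.956) ^ ((1:ℝ) - 0.956) := by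
    have e1 : (1:ℝ) - 0.956 = 11 / 250 := by norm_num
    rw [e1]
    exact lt_rpow_aux (by norm_num) (by norm_num) 11 250 (by norm_num) (by norm_num)
      (by norm_num)
  have hD : ((3:ℝ) - 0.956) ^ ((3:ℝ) - 0.956) < 4.3116 := by
    have e1 : (3:ℝ) - 0.956 = 511 / 250 := by norm_num
    rw [e1]
    exact rpow_lt_aux (by norm_num) (by norm_num) 511 250 (by norm_num) (by norm_num)
      (by rw [show (511:ℕ) = 250 * 2 + 11 from rfl, pow_add, pow_mul]; norm_num)
  have hlo : H 0.955 < 0 := by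
    simp only [hH]
    nlinarith [hA, hB]
  have hhi : 0 < H 0.956 := by
    simp only [hH]
    nlinarith [hC, hD]
  -- IVT
  have hivt := intermediate_value_Ioo (by norm_num : (0.955:ℝ) ≤ 0.956) hcont
  obtain ⟨a₀, ha₀, hroot⟩ := hivt ⟨hlo, hhi⟩
  simp only [hH] at hroot
  have ha1 : (0.955:ℝ) < a₀ := ha₀.1
  have ha2 : a₀ < (0.956:ℝ) := ha₀.2
  have ha1' : (0.955:ℝ) < a₀ := by exact_mod_cast ha1
  have ha0pos : (0:ℝ) < a₀ := by nlinarith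
  have ha0lt1 : a₀ < 1 := by nlinarith
  have hAa : (0:ℝ) < a₀ ^ a₀ := Real.rpow_pos_of_pos ha0pos _
  have hB1 : (0:ℝ) < (1 - a₀) ^ (1 - a₀) := Real.rpow_pos_of_pos (by nlinarith) _
  have hB3 : (0:ℝ) < (3 - a₀) ^ (3 - a₀) := Real.rpow_pos_of_pos (by nlinarith) _
  have heq : (27 / (a₀ ^ a₀ * (3 - a₀) ^ (3 - a₀)) : ℝ) =
      5.45 / (a₀ ^ a₀ * (1 - a₀) ^ (1 - a₀)) := by
    rw [div_eq_div_iff (by positivity) (by positivity)]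
    linear_combination (a₀ ^ a₀) * hroot
  have hmem₀ : a₀ ∈ Set.Ioo (0:ℝ) 1 := ⟨ha0pos, ha0lt1⟩
  have hmem₁ : (0.956:ℝ) ∈ Set.Ioo (0:ℝ) 1 := by constructor <;> norm_num
  have hlt := mono_f hmem₀ hmem₁ ha2
  simp only at hlt
  have hE : (0.95785:ℝ) < (0.956:ℝ) ^ (0.956:ℝ) := by
    have e1 : (0.956:ℝ) = 239 / 250 := by norm_num
    rw [e1]
    exact lt_rpow_aux (by norm_num) (by norm_num) 239 250 (by norm_num) (by norm_num)
      (by norm_num)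
  have hD' : (4.31115:ℝ) < ((3:ℝ) - 0.956) ^ ((3:ℝ) - 0.956) := by
    have e1 : (3:ℝ) - 0.956 = 511 / 250 := by norm_num
    rw [e1]
    exact lt_rpow_aux (by norm_num) (by norm_num) 511 250 (by norm_num) (by norm_num)
      (by rw [show (511:ℕ) = 250 * 2 + 11 from rfl, pow_add, pow_mul]; norm_num)
  have hpos : (0:ℝ) < (0.956:ℝ) ^ (0.956:ℝ) * ((3:ℝ) - 0.956) ^ ((3:ℝ) - 0.956) := by
    have := Real.rpow_pos_of_pos (show (0:ℝ) < 0.956 by norm_num) (0.956:ℝ)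
    have := Real.rpow_pos_of_pos (show (0:ℝ) < (3:ℝ) - 0.956 by norm_num) ((3:ℝ) - 0.956)
    positivity
  have hbound : (27:ℝ) / ((0.956:ℝ) ^ (0.956:ℝ) * ((3:ℝ) - 0.956) ^ ((3:ℝ) - 0.956)) <
      6.54 := by
    rw [div_lt_iff₀ hpos]
    nlinarith [hE, hD']
  have hf : (27 / (a₀ ^ a₀ * (3 - a₀) ^ (3 - a₀)) : ℝ) < 6.54 := by linarith
  exact ⟨a₀, ⟨by nlinarith, by nlinarith⟩, heq, mono_f, hf, heq ▸ hf⟩
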